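/- Let G be a finite abelian group, let r ≥ 2 be a multiple of exp(G), and let n ≥ 1. Then there exists an r-graph H on n vertices such that: (i) every set of s_r(G) vertices of H contains an edge of H (so α(H) < s_r(G)), and (ii) every (r−1)-element subset of V(H) is contained in at most ⌈n/|G|⌉ edges of H, i.e., Δ_{r-1}(H) ≤ ⌈n/|G|⌉. -/

import Mathlib

/-- `s_r(G)`: the smallest `s` such that every multiset of `s` elements of `G`
has a zero-sum sub-multiset of size `r`. -/
noncomputable def egzConst (G : Type*) [AddCommGroup G] [Fintype G] (r : ℕ) : ℕ :=
  sInf {s | ∀ S : Multiset G, Multiset.card S = s →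
    ∃ T ≤ S, Multiset.card T = r ∧ T.sum = 0}

/-!
Label the vertices `0, …, n - 1` cyclically by the elements of `G`, so that every label is used
at most `⌈n / |G|⌉` times, and let the edges be the `r`-sets whose labels sum to zero. A set of
`s_r(G)` vertices carries `s_r(G)` labels, among which some `r` sum to zero; their vertices form
an edge inside the set. An edge through a given `(r - 1)`-set `A` is `A` plus one vertex whose
label must be `-∑_{a ∈ A} f a`, so there are at most `⌈n / |G|⌉` of them.
-/

open Finset

namespace Multiset

theorem exists_le_map_eq_of_le_map {α β : Type*} [DecidableEq β] (f : α → β)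
    (s : Multiset α) {t : Multiset β} (h : t ≤ s.map f) : ∃ u ≤ s, u.map f = t := by
  induction s using Multiset.induction_on generalizing t with
  | empty => exact ⟨0, le_rfl, (by simpa using h : t = 0).symm⟩
  | cons a s ih =>
    rw [map_cons, ← erase_le_iff_le_cons] at h
    obtain ⟨u, hus, hu⟩ := ih h
    by_cases hfa : f a ∈ t
    · exact ⟨a ::ₘ u, cons_le_cons a hus, by rw [map_cons, hu, cons_erase hfa]⟩
    · exact ⟨u, hus.trans (le_cons_self s a), by rw [hu, erase_of_notMem hfa]⟩

theorem exists_lt_count_of_mul_lt_card {α : Type*} [Fintype α] [DecidableEq α]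
    {s : Multiset α} {k : ℕ} (h : Fintype.card α * k < card s) : ∃ a, k < s.count a := by
  rw [← sum_count_eq_card (s := univ) fun a _ => mem_univ a] at h
  obtain ⟨a, -, ha⟩ := exists_lt_of_sum_lt (s := univ) (f := fun _ => k) (g := (s.count ·))
    (by rwa [sum_const, card_univ, smul_eq_mul])
  exact ⟨a, ha⟩

end Multiset

theorem exists_zeroSum_le_of_card_eq_egzConst {G : Type*} [AddCommGroup G] [Fintype G] {r : ℕ}
    (hdvd : AddMonoid.exponent G ∣ r) {S : Multiset G} (hS : Multiset.card S = egzConst G r) :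
    ∃ T ≤ S, Multiset.card T = r ∧ T.sum = 0 := by
  classical
  -- pigeonhole: `|G| (r - 1) + 1` elements contain some `g` repeated `r` times, and `r • g = 0`
  have hmem : Fintype.card G * (r - 1) + 1 ∈ {s | ∀ S : Multiset G, Multiset.card S = s →
      ∃ T ≤ S, Multiset.card T = r ∧ T.sum = 0} := by
    intro S hS
    obtain ⟨g, hg⟩ := Multiset.exists_lt_count_of_mul_lt_card (s := S) (k := r - 1) (by omega)
    refine ⟨Multiset.replicate r g, Multiset.le_count_iff_replicate_le.mp (by omega),
      Multiset.card_replicate r g, ?_⟩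
    rw [Multiset.sum_replicate]
    exact AddMonoid.exponent_dvd_iff_forall_nsmul_eq_zero.mp hdvd g
  exact Nat.sInf_mem ⟨_, hmem⟩ S hS

section ZeroSumHypergraph

variable {V G : Type*} [Fintype V] [AddCommGroup G] [DecidableEq G]

def zeroSumHypergraph (f : V → G) (r : ℕ) : Finset (Finset V) :=
  {e ∈ powersetCard r univ | ∑ v ∈ e, f v = 0}

variable {f : V → G} {r : ℕ}

theorem mem_zeroSumHypergraph {e : Finset V} :
    e ∈ zeroSumHypergraph f r ↔ e.card = r ∧ ∑ v ∈ e, f v = 0 := by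
  simp [zeroSumHypergraph]

theorem exists_mem_zeroSumHypergraph_subset [Fintype G] (hdvd : AddMonoid.exponent G ∣ r)
    (S : Finset V) (hS : S.card = egzConst G r) : ∃ e ∈ zeroSumHypergraph f r, e ⊆ S := by
  obtain ⟨T, hTS, hTcard, hTsum⟩ :=
    exists_zeroSum_le_of_card_eq_egzConst hdvd (S := S.val.map f) (by simpa using hS)
  obtain ⟨u, huS, rfl⟩ := Multiset.exists_le_map_eq_of_le_map f S.val hTS
  refine ⟨⟨u, Multiset.nodup_of_le huS S.nodup⟩, ?_, Multiset.subset_of_le huS⟩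
  exact mem_zeroSumHypergraph.mpr ⟨by simpa using hTcard, hTsum⟩

theorem card_filter_superset_zeroSumHypergraph_le [DecidableEq V] {A : Finset V} {k : ℕ}
    (hA : A.card + 1 = r) (hf : ∀ g, #{v | f v = g} ≤ k) :
    #{e ∈ zeroSumHypergraph f r | A ⊆ e} ≤ k := by
  calc #{e ∈ zeroSumHypergraph f r | A ⊆ e}
      ≤ #(({v | f v = -∑ a ∈ A, f a} : Finset V).image (insert · A)) := card_le_card ?_
    _ ≤ #{v | f v = -∑ a ∈ A, f a} := card_image_le
    _ ≤ k := hf _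
  intro e he
  obtain ⟨⟨hcard, hsum⟩, hAe⟩ := (mem_filter.mp he).imp_left mem_zeroSumHypergraph.mp
  obtain ⟨v, hvA, rfl⟩ := exists_eq_insert_iff.mpr ⟨hAe, by omega⟩
  rw [sum_insert hvA, add_eq_zero_iff_eq_neg] at hsum
  exact mem_image.mpr ⟨v, mem_filter.mpr ⟨mem_univ v, hsum⟩, rfl⟩

end ZeroSumHypergraph

theorem card_filter_mod_eq_le {n m : ℕ} (hm : 0 < m) (k : ℕ) :
    #{i : Fin n | (i : ℕ) % m = k} ≤ (n + m - 1) / m := by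
  calc #{i : Fin n | (i : ℕ) % m = k}
      ≤ #(range ((n + m - 1) / m)) := card_le_card_of_injOn (fun i => (i : ℕ) / m) ?_ ?_
    _ = (n + m - 1) / m := card_range _
  · intro i _
    rw [coe_range, Set.mem_Iio, Nat.div_lt_iff_lt_mul hm]
    have := Nat.lt_div_mul_add (a := n + m - 1) hm
    have := i.isLt
    omega
  · intro i hi j hj hij
    simp only [coe_filter, mem_univ, true_and, Set.mem_ofPred_eq] at hi hj
    ext
    rw [← Nat.div_add_mod i m, ← Nat.div_add_mod j m, hi, hj]
    exact congrArg (m * · + k) hij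

theorem exists_labeling_card_fiber_le (G : Type*) [Fintype G] [Nonempty G] [DecidableEq G]
    (n : ℕ) :
    ∃ f : Fin n → G, ∀ g, #{i | f i = g} ≤ (n + Fintype.card G - 1) / Fintype.card G := by
  have hm : 0 < Fintype.card G := Fintype.card_pos
  let e := Fintype.equivFin G
  refine ⟨fun i => e.symm ⟨i % Fintype.card G, Nat.mod_lt _ hm⟩, fun g => ?_⟩
  simpa only [Equiv.symm_apply_eq, Fin.ext_iff] using card_filter_mod_eq_le hm (e g)

theorem codegree_construction_general (G : Type*) [AddCommGroup G] [Fintype G]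
    (r : ℕ) (hr : 2 ≤ r) (hdvd : AddMonoid.exponent G ∣ r) (n : ℕ) :
    ∃ H : Finset (Finset (Fin n)),
      (∀ e ∈ H, e.card = r) ∧
      (∀ S : Finset (Fin n), S.card = egzConst G r → ∃ e ∈ H, e ⊆ S) ∧
      (∀ A : Finset (Fin n), A.card = r - 1 →
        (H.filter (fun e => A ⊆ e)).card ≤
          (n + Fintype.card G - 1) / Fintype.card G) := by
  classical
  obtain ⟨f, hf⟩ := exists_labeling_card_fiber_le G n
  refine ⟨zeroSumHypergraph f r, fun e he => (mem_zeroSumHypergraph.mp he).1,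
    exists_mem_zeroSumHypergraph_subset hdvd, fun A hA => ?_⟩
  exact card_filter_superset_zeroSumHypergraph_le (by omega) hf

/-- Let `G` be a finite abelian group, `r ≥ 2` a multiple of `exp(G)`, and `n ≥ 1`.
Then there is an `r`-graph `H` on `n` vertices such that (i) every set of `s_r(G)`
vertices contains an edge of `H`, and (ii) every `(r−1)`-element vertex subset is
contained in at most `⌈n / |G|⌉` edges of `H`. -/
theorem codegree_construction (G : Type*) [AddCommGroup G] [Fintype G]
    (r : ℕ) (hr : 2 ≤ r) (hdvd : AddMonoid.exponent G ∣ r) (n : ℕ) (hn : 1 ≤ n) :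
    ∃ H : Finset (Finset (Fin n)),
      (∀ e ∈ H, e.card = r) ∧
      (∀ S : Finset (Fin n), S.card = egzConst G r → ∃ e ∈ H, e ⊆ S) ∧
      (∀ A : Finset (Fin n), A.card = r - 1 →
        (H.filter (fun e => A ⊆ e)).card ≤
          (n + Fintype.card G - 1) / Fintype.card G) :=
  codegree_construction_general G r hr hdvd n
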